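/- arXiv:1011.0079 — 9 statements merged into one kernel-verified Lean document; each statement's English description precedes it below -/
import Mathlib

section
/- If X is a normal Hausdorff space, then the standard contact algebra (RC(X), ρ_X) satisfies axiom (C5): if F(-ρ_X)G then there exists H ∈ RC(X) with F(-ρ_X)H and G(-ρ_X)H*. -/
/-! Separate the closed sets `F` and `G` by disjoint open sets `U ⊇ F` and `V ⊇ G`, and take
`H = cl V`, which is regular closed because `V` is open. Then `H ⊆ X \ U` misses `F`, and
`H* = cl (X \ cl V) ⊆ X \ V` misses `G`. -/

open Set

section

variable {X : Type*} [TopologicalSpace X] {V : Set X}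

theorem IsOpen.closure_interior_closure (hV : IsOpen V) :
    closure (interior (closure V)) = closure V := by
  simpa only [hV.interior_eq] using closure_interior_idem (s := V)

theorem IsOpen.disjoint_closure_compl_closure (hV : IsOpen V) :
    Disjoint V (closure (closure V)ᶜ) := by
  rw [closure_compl]
  exact disjoint_compl_right_iff_subset.mpr hV.subset_interior_closure

end

theorem stmt_4_general (X : Type*) [TopologicalSpace X] [NormalSpace X]
    (F G : Set X) (hF : closure (interior F) = F) (hG : closure (interior G) = G)
    (h : F ∩ G = ∅) :
    ∃ H : Set X, closure (interior H) = H ∧ F ∩ H = ∅ ∧ G ∩ closure Hᶜ = ∅ := by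
  obtain ⟨U, V, hU, hV, hFU, hGV, hUV⟩ :=
    normal_separation (hF ▸ isClosed_closure) (hG ▸ isClosed_closure)
      (disjoint_iff_inter_eq_empty.mpr h)
  refine ⟨closure V, hV.closure_interior_closure, ?_, ?_⟩
  · exact disjoint_iff_inter_eq_empty.mp ((hUV.closure_right hU).mono_left hFU)
  · exact disjoint_iff_inter_eq_empty.mp (hV.disjoint_closure_compl_closure.mono_left hGV)

/-- In a normal Hausdorff space, (RC(X), ρ_X) satisfies (C5):
if F ∩ G = ∅ then there is a regular closed H with F ∩ H = ∅ and G ∩ H* = ∅. -/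
theorem stmt_4 (X : Type*) [TopologicalSpace X] [NormalSpace X] [T2Space X]
    (F G : Set X) (hF : closure (interior F) = F) (hG : closure (interior G) = G)
    (h : F ∩ G = ∅) :
    ∃ H : Set X, closure (interior H) = H ∧ F ∩ H = ∅ ∧ G ∩ closure Hᶜ = ∅ :=
  stmt_4_general X F G hF hG h
end

section
/- Let (B, C) be a normal contact algebra and σ a cluster in (B, C). If a ∈ B and a ∉ σ, then there exists b ∈ B such that b ∉ σ and a ≪ b (i.e., a(-C)b*). -/
theorem exists_mem_not_contact_of_notMem {B : Type*} {C : B → B → Prop} {σ : Set B}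
    (hK3 : ∀ a : B, (∀ b ∈ σ, C a b) → a ∈ σ) {a : B} (ha : a ∉ σ) :
    ∃ d ∈ σ, ¬ C a d := by
  by_contra! h
  exact ha (hK3 a h)

theorem notMem_of_not_contact {B : Type*} {C : B → B → Prop} {σ : Set B}
    (hC3 : ∀ a b : B, C a b → C b a) (hK1 : ∀ a ∈ σ, ∀ b ∈ σ, C a b)
    {d e : B} (hd : d ∈ σ) (hde : ¬ C d e) : e ∉ σ :=
  fun he => hde (hC3 _ _ (hK1 e he d hd))

theorem stmt_5_general {B : Type*} [BooleanAlgebra B] (C : B → B → Prop)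
    (hC3 : ∀ a b : B, C a b → C b a)
    (hC5 : ∀ a b : B, ¬ C a b → ∃ c : B, ¬ C a c ∧ ¬ C b cᶜ)
    (σ : Set B)
    (hK1 : ∀ a ∈ σ, ∀ b ∈ σ, C a b)
    (hK3 : ∀ a : B, (∀ b ∈ σ, C a b) → a ∈ σ)
    (a : B) (ha : a ∉ σ) :
    ∃ b : B, b ∉ σ ∧ ¬ C a bᶜ := by
  obtain ⟨d, hd, had⟩ := exists_mem_not_contact_of_notMem hK3 ha
  obtain ⟨c, hac, hdc⟩ := hC5 a d had
  exact ⟨cᶜ, notMem_of_not_contact hC3 hK1 hd hdc, by rwa [compl_compl]⟩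

/-- In a normal contact algebra, if σ is a cluster and a ∉ σ, then
there is b ∉ σ with a ≪ b (i.e. ¬ C a bᶜ). -/
theorem stmt_5 {B : Type*} [BooleanAlgebra B] (C : B → B → Prop)
    (hC1 : ∀ a : B, a ≠ ⊥ → C a a)
    (hC2 : ∀ a b : B, C a b → a ≠ ⊥ ∧ b ≠ ⊥)
    (hC3 : ∀ a b : B, C a b → C b a)
    (hC4 : ∀ a b c : B, C a (b ⊔ c) ↔ C a b ∨ C a c)
    (hC5 : ∀ a b : B, ¬ C a b → ∃ c : B, ¬ C a c ∧ ¬ C b cᶜ)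
    (hC6 : ∀ a : B, a ≠ ⊤ → ∃ b : B, b ≠ ⊥ ∧ ¬ C b a)
    (σ : Set B) (hne : σ.Nonempty)
    (hK1 : ∀ a ∈ σ, ∀ b ∈ σ, C a b)
    (hK2 : ∀ a b : B, a ⊔ b ∈ σ → a ∈ σ ∨ b ∈ σ)
    (hK3 : ∀ a : B, (∀ b ∈ σ, C a b) → a ∈ σ)
    (a : B) (ha : a ∉ σ) :
    ∃ b : B, b ∉ σ ∧ ¬ C a bᶜ :=
  stmt_5_general C hC3 hC5 σ hK1 hK3 a ha
end

section
/- Let (B, ρ, 𝔹) be a local contact algebra. Then (B, C_ρ), where a C_ρ b iff (a ρ b, or both a ∉ 𝔹 and b ∉ 𝔹), is a normal contact algebra. -/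
/-! The extension only adds contacts between unbounded elements, so (C1)–(C4) transfer
directly, using that `𝔹` is an ideal for (C4). A non-contact `¬ a C_ρ b` forces `¬ a ρ b`
with one of `a`, `b` bounded; (BC1) then interpolates a bounded `d` between that element and
the complement of the other, and `d`, `dᶜ` separate `a` and `b` in `C_ρ` as well. (C6) is
(BC3) applied to `aᶜ`. -/

namespace LocalContactAlgebra

variable {α : Type*} {ρ : α → α → Prop} {𝔹 : Set α}

def alexandroffExt (ρ : α → α → Prop) (𝔹 : Set α) (a b : α) : Prop :=
  ρ a b ∨ (a ∉ 𝔹 ∧ b ∉ 𝔹)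

theorem not_alexandroffExt_iff {a b : α} :
    ¬ alexandroffExt ρ 𝔹 a b ↔ ¬ ρ a b ∧ (a ∈ 𝔹 ∨ b ∈ 𝔹) := by
  unfold alexandroffExt
  tauto

theorem sup_mem_iff [SemilatticeSup α] (hdown : ∀ a b : α, a ≤ b → b ∈ 𝔹 → a ∈ 𝔹)
    (hsup : ∀ a b : α, a ∈ 𝔹 → b ∈ 𝔹 → a ⊔ b ∈ 𝔹) {a b : α} :
    a ⊔ b ∈ 𝔹 ↔ a ∈ 𝔹 ∧ b ∈ 𝔹 :=
  ⟨fun h => ⟨hdown _ _ le_sup_left h, hdown _ _ le_sup_right h⟩, fun h => hsup _ _ h.1 h.2⟩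

theorem ne_bot_of_alexandroffExt [Bot α] (hC2 : ∀ a b : α, ρ a b → a ≠ ⊥ ∧ b ≠ ⊥)
    (hbot : ⊥ ∈ 𝔹) {a b : α} : alexandroffExt ρ 𝔹 a b → a ≠ ⊥ ∧ b ≠ ⊥
  | .inl h => hC2 a b h
  | .inr ⟨ha, hb⟩ => ⟨by rintro rfl; exact ha hbot, by rintro rfl; exact hb hbot⟩

theorem alexandroffExt_symm (hC3 : ∀ a b : α, ρ a b → ρ b a) {a b : α} :
    alexandroffExt ρ 𝔹 a b → alexandroffExt ρ 𝔹 b a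
  | .inl h => .inl (hC3 a b h)
  | .inr ⟨ha, hb⟩ => .inr ⟨hb, ha⟩

theorem alexandroffExt_sup_right_iff [SemilatticeSup α]
    (hC4 : ∀ a b c : α, ρ a (b ⊔ c) ↔ ρ a b ∨ ρ a c)
    (hdown : ∀ a b : α, a ≤ b → b ∈ 𝔹 → a ∈ 𝔹)
    (hsup : ∀ a b : α, a ∈ 𝔹 → b ∈ 𝔹 → a ⊔ b ∈ 𝔹) (a b c : α) :
    alexandroffExt ρ 𝔹 a (b ⊔ c) ↔ alexandroffExt ρ 𝔹 a b ∨ alexandroffExt ρ 𝔹 a c := by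
  unfold alexandroffExt
  rw [hC4, sup_mem_iff hdown hsup]
  tauto

theorem exists_mem_interpolant [BooleanAlgebra α]
    (hBC1 : ∀ a c : α, a ∈ 𝔹 → ¬ ρ a cᶜ → ∃ b ∈ 𝔹, ¬ ρ a bᶜ ∧ ¬ ρ b cᶜ)
    {a b : α} (ha : a ∈ 𝔹) (hab : ¬ ρ a b) : ∃ d ∈ 𝔹, ¬ ρ a dᶜ ∧ ¬ ρ d b := by
  simpa only [compl_compl] using hBC1 a bᶜ ha (by rwa [compl_compl])

theorem alexandroffExt_normal [BooleanAlgebra α] (hC3 : ∀ a b : α, ρ a b → ρ b a)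
    (hBC1 : ∀ a c : α, a ∈ 𝔹 → ¬ ρ a cᶜ → ∃ b ∈ 𝔹, ¬ ρ a bᶜ ∧ ¬ ρ b cᶜ) {a b : α}
    (hab : ¬ alexandroffExt ρ 𝔹 a b) :
    ∃ c, ¬ alexandroffExt ρ 𝔹 a c ∧ ¬ alexandroffExt ρ 𝔹 b cᶜ := by
  simp only [not_alexandroffExt_iff] at hab ⊢
  obtain ⟨hρ, ha | hb⟩ := hab
  · obtain ⟨d, hd, had, hdb⟩ := exists_mem_interpolant hBC1 ha hρ
    refine ⟨dᶜ, ⟨had, .inl ha⟩, ?_⟩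
    rw [compl_compl]
    exact ⟨fun h => hdb (hC3 b d h), .inr hd⟩
  · obtain ⟨d, hd, hbd, hda⟩ := exists_mem_interpolant hBC1 hb (fun h => hρ (hC3 b a h))
    exact ⟨d, ⟨fun h => hda (hC3 a d h), .inr hd⟩, hbd, .inl hb⟩

theorem exists_not_alexandroffExt [BooleanAlgebra α]
    (hBC3 : ∀ a : α, a ≠ ⊥ → ∃ b ∈ 𝔹, b ≠ ⊥ ∧ ¬ ρ b aᶜ)
    {a : α} (ha : a ≠ ⊤) : ∃ b, b ≠ ⊥ ∧ ¬ alexandroffExt ρ 𝔹 b a := by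
  obtain ⟨b, hb, hb0, hba⟩ := hBC3 aᶜ (compl_eq_bot.not.mpr ha)
  rw [compl_compl] at hba
  exact ⟨b, hb0, not_alexandroffExt_iff.mpr ⟨hba, .inl hb⟩⟩

end LocalContactAlgebra

theorem stmt_6_general {B : Type*} [BooleanAlgebra B] (ρ : B → B → Prop) (𝔹 : Set B)
    -- (B, ρ) is a contact algebra
    (hC1 : ∀ a : B, a ≠ ⊥ → ρ a a)
    (hC2 : ∀ a b : B, ρ a b → a ≠ ⊥ ∧ b ≠ ⊥)
    (hC3 : ∀ a b : B, ρ a b → ρ b a)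
    (hC4 : ∀ a b c : B, ρ a (b ⊔ c) ↔ ρ a b ∨ ρ a c)
    -- 𝔹 is an ideal of B
    (hbot : ⊥ ∈ 𝔹)
    (hdown : ∀ a b : B, a ≤ b → b ∈ 𝔹 → a ∈ 𝔹)
    (hsup : ∀ a b : B, a ∈ 𝔹 → b ∈ 𝔹 → a ⊔ b ∈ 𝔹)
    -- (BC1)-(BC3), where a ≪_ρ b means ¬ ρ a bᶜ
    (hBC1 : ∀ a c : B, a ∈ 𝔹 → ¬ ρ a cᶜ → ∃ b ∈ 𝔹, ¬ ρ a bᶜ ∧ ¬ ρ b cᶜ)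
    (hBC3 : ∀ a : B, a ≠ ⊥ → ∃ b ∈ 𝔹, b ≠ ⊥ ∧ ¬ ρ b aᶜ) :
    -- (B, C_ρ) is a normal contact algebra, where
    -- C_ρ a b := ρ a b ∨ (a ∉ 𝔹 ∧ b ∉ 𝔹)
    (∀ a : B, a ≠ ⊥ → (ρ a a ∨ (a ∉ 𝔹 ∧ a ∉ 𝔹))) ∧
    (∀ a b : B, (ρ a b ∨ (a ∉ 𝔹 ∧ b ∉ 𝔹)) → a ≠ ⊥ ∧ b ≠ ⊥) ∧
    (∀ a b : B, (ρ a b ∨ (a ∉ 𝔹 ∧ b ∉ 𝔹)) → (ρ b a ∨ (b ∉ 𝔹 ∧ a ∉ 𝔹))) ∧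
    (∀ a b c : B, (ρ a (b ⊔ c) ∨ (a ∉ 𝔹 ∧ b ⊔ c ∉ 𝔹)) ↔
      ((ρ a b ∨ (a ∉ 𝔹 ∧ b ∉ 𝔹)) ∨ (ρ a c ∨ (a ∉ 𝔹 ∧ c ∉ 𝔹)))) ∧
    (∀ a b : B, ¬ (ρ a b ∨ (a ∉ 𝔹 ∧ b ∉ 𝔹)) →
      ∃ c : B, ¬ (ρ a c ∨ (a ∉ 𝔹 ∧ c ∉ 𝔹)) ∧ ¬ (ρ b cᶜ ∨ (b ∉ 𝔹 ∧ cᶜ ∉ 𝔹))) ∧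
    (∀ a : B, a ≠ ⊤ → ∃ b : B, b ≠ ⊥ ∧ ¬ (ρ b a ∨ (b ∉ 𝔹 ∧ a ∉ 𝔹))) :=
  ⟨fun a ha => .inl (hC1 a ha),
    fun _ _ => LocalContactAlgebra.ne_bot_of_alexandroffExt hC2 hbot,
    fun _ _ => LocalContactAlgebra.alexandroffExt_symm hC3,
    LocalContactAlgebra.alexandroffExt_sup_right_iff hC4 hdown hsup,
    fun _ _ => LocalContactAlgebra.alexandroffExt_normal hC3 hBC1,
    fun _ => LocalContactAlgebra.exists_not_alexandroffExt hBC3⟩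

/-- If (B, ρ, 𝔹) is a local contact algebra, then (B, C_ρ), where
a C_ρ b iff (a ρ b or a,b ∉ 𝔹), is a normal contact algebra. -/
theorem stmt_6 {B : Type*} [BooleanAlgebra B] (ρ : B → B → Prop) (𝔹 : Set B)
    -- (B, ρ) is a contact algebra
    (hC1 : ∀ a : B, a ≠ ⊥ → ρ a a)
    (hC2 : ∀ a b : B, ρ a b → a ≠ ⊥ ∧ b ≠ ⊥)
    (hC3 : ∀ a b : B, ρ a b → ρ b a)
    (hC4 : ∀ a b c : B, ρ a (b ⊔ c) ↔ ρ a b ∨ ρ a c)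
    -- 𝔹 is an ideal of B
    (hbot : ⊥ ∈ 𝔹)
    (hdown : ∀ a b : B, a ≤ b → b ∈ 𝔹 → a ∈ 𝔹)
    (hsup : ∀ a b : B, a ∈ 𝔹 → b ∈ 𝔹 → a ⊔ b ∈ 𝔹)
    -- (BC1)-(BC3), where a ≪_ρ b means ¬ ρ a bᶜ
    (hBC1 : ∀ a c : B, a ∈ 𝔹 → ¬ ρ a cᶜ → ∃ b ∈ 𝔹, ¬ ρ a bᶜ ∧ ¬ ρ b cᶜ)
    (hBC2 : ∀ a b : B, ρ a b → ∃ c ∈ 𝔹, ρ a (c ⊓ b))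
    (hBC3 : ∀ a : B, a ≠ ⊥ → ∃ b ∈ 𝔹, b ≠ ⊥ ∧ ¬ ρ b aᶜ) :
    -- (B, C_ρ) is a normal contact algebra, where
    -- C_ρ a b := ρ a b ∨ (a ∉ 𝔹 ∧ b ∉ 𝔹)
    (∀ a : B, a ≠ ⊥ → (ρ a a ∨ (a ∉ 𝔹 ∧ a ∉ 𝔹))) ∧
    (∀ a b : B, (ρ a b ∨ (a ∉ 𝔹 ∧ b ∉ 𝔹)) → a ≠ ⊥ ∧ b ≠ ⊥) ∧
    (∀ a b : B, (ρ a b ∨ (a ∉ 𝔹 ∧ b ∉ 𝔹)) → (ρ b a ∨ (b ∉ 𝔹 ∧ a ∉ 𝔹))) ∧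
    (∀ a b c : B, (ρ a (b ⊔ c) ∨ (a ∉ 𝔹 ∧ b ⊔ c ∉ 𝔹)) ↔
      ((ρ a b ∨ (a ∉ 𝔹 ∧ b ∉ 𝔹)) ∨ (ρ a c ∨ (a ∉ 𝔹 ∧ c ∉ 𝔹)))) ∧
    (∀ a b : B, ¬ (ρ a b ∨ (a ∉ 𝔹 ∧ b ∉ 𝔹)) →
      ∃ c : B, ¬ (ρ a c ∨ (a ∉ 𝔹 ∧ c ∉ 𝔹)) ∧ ¬ (ρ b cᶜ ∨ (b ∉ 𝔹 ∧ cᶜ ∉ 𝔹))) ∧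
    (∀ a : B, a ≠ ⊤ → ∃ b : B, b ≠ ⊥ ∧ ¬ (ρ b a ∨ (b ∉ 𝔹 ∧ a ∉ 𝔹))) :=
  stmt_6_general ρ 𝔹 hC1 hC2 hC3 hC4 hbot hdown hsup hBC1 hBC3
end

section
/- Let (B, ρ, 𝔹) be a local contact algebra with 1 ∉ 𝔹. Then σ_∞ = {b ∈ B : b ∉ 𝔹} is a cluster in the normal contact algebra (B, C_ρ), where C_ρ is the Alexandroff extension of ρ. -/
/-!
(K1) and (K2) hold because `𝔹` is closed under joins. For (K3), a bounded `a` is separated from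
`⊤ᶜ = ⊥`, so (BC1) gives a bounded `b` with `¬ a ρ bᶜ`; since `b ⊔ bᶜ = ⊤` is unbounded, `bᶜ` is an
element of `σ_∞` that is not `C_ρ`-related to `a`.
-/

section LocalContactAlgebra

variable {B : Type*} [BooleanAlgebra B] {𝔹 : Set B}

theorem compl_notMem_of_mem (hsup : ∀ a b : B, a ∈ 𝔹 → b ∈ 𝔹 → a ⊔ b ∈ 𝔹)
    (htop : (⊤ : B) ∉ 𝔹) {b : B} (hb : b ∈ 𝔹) : bᶜ ∉ 𝔹 :=
  fun hbc => htop (sup_compl_eq_top (x := b) ▸ hsup b bᶜ hb hbc)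

theorem exists_notMem_not_rel_of_mem (ρ : B → B → Prop)
    (hC2 : ∀ a b : B, ρ a b → a ≠ ⊥ ∧ b ≠ ⊥)
    (hsup : ∀ a b : B, a ∈ 𝔹 → b ∈ 𝔹 → a ⊔ b ∈ 𝔹)
    (hBC1 : ∀ a c : B, a ∈ 𝔹 → ¬ ρ a cᶜ → ∃ b ∈ 𝔹, ¬ ρ a bᶜ ∧ ¬ ρ b cᶜ)
    (htop : (⊤ : B) ∉ 𝔹) {a : B} (ha : a ∈ 𝔹) : ∃ b ∉ 𝔹, ¬ ρ a b := by
  have hsep : ¬ ρ a (⊤ : B)ᶜ := by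
    rw [compl_top]
    exact fun h => (hC2 a ⊥ h).2 rfl
  obtain ⟨b, hb, hab, -⟩ := hBC1 a ⊤ ha hsep
  exact ⟨bᶜ, compl_notMem_of_mem hsup htop hb, hab⟩

end LocalContactAlgebra

theorem stmt_7_general {B : Type*} [BooleanAlgebra B] (ρ : B → B → Prop) (𝔹 : Set B)
    (hC2 : ∀ a b : B, ρ a b → a ≠ ⊥ ∧ b ≠ ⊥)
    (hsup : ∀ a b : B, a ∈ 𝔹 → b ∈ 𝔹 → a ⊔ b ∈ 𝔹)
    (hBC1 : ∀ a c : B, a ∈ 𝔹 → ¬ ρ a cᶜ → ∃ b ∈ 𝔹, ¬ ρ a bᶜ ∧ ¬ ρ b cᶜ)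
    (htop : (⊤ : B) ∉ 𝔹) :
    -- σ_∞ = {b | b ∉ 𝔹} is a cluster in (B, C_ρ), where
    -- C_ρ a b := ρ a b ∨ (a ∉ 𝔹 ∧ b ∉ 𝔹)
    ({b : B | b ∉ 𝔹}.Nonempty) ∧
    (∀ a ∈ {b : B | b ∉ 𝔹}, ∀ b ∈ {b : B | b ∉ 𝔹}, ρ a b ∨ (a ∉ 𝔹 ∧ b ∉ 𝔹)) ∧
    (∀ a b : B, a ⊔ b ∈ {b : B | b ∉ 𝔹} → a ∈ {b : B | b ∉ 𝔹} ∨ b ∈ {b : B | b ∉ 𝔹}) ∧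
    (∀ a : B, (∀ b ∈ {b : B | b ∉ 𝔹}, ρ a b ∨ (a ∉ 𝔹 ∧ b ∉ 𝔹)) → a ∈ {b : B | b ∉ 𝔹}) := by
  refine ⟨⟨⊤, htop⟩, fun a ha b hb => Or.inr ⟨ha, hb⟩,
    fun a b hab => not_and_or.mp fun h => hab (hsup a b h.1 h.2), fun a hcontact ha => ?_⟩
  obtain ⟨b, hb, hab⟩ := exists_notMem_not_rel_of_mem ρ hC2 hsup hBC1 htop ha
  exact (hcontact b hb).elim hab fun h => h.1 ha

/-- If (B, ρ, 𝔹) is a local contact algebra with 1 ∉ 𝔹, then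
σ_∞ = {b : b ∉ 𝔹} is a cluster in (B, C_ρ). -/
theorem stmt_7 {B : Type*} [BooleanAlgebra B] (ρ : B → B → Prop) (𝔹 : Set B)
    (hC1 : ∀ a : B, a ≠ ⊥ → ρ a a)
    (hC2 : ∀ a b : B, ρ a b → a ≠ ⊥ ∧ b ≠ ⊥)
    (hC3 : ∀ a b : B, ρ a b → ρ b a)
    (hC4 : ∀ a b c : B, ρ a (b ⊔ c) ↔ ρ a b ∨ ρ a c)
    (hbot : ⊥ ∈ 𝔹)
    (hdown : ∀ a b : B, a ≤ b → b ∈ 𝔹 → a ∈ 𝔹)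
    (hsup : ∀ a b : B, a ∈ 𝔹 → b ∈ 𝔹 → a ⊔ b ∈ 𝔹)
    (hBC1 : ∀ a c : B, a ∈ 𝔹 → ¬ ρ a cᶜ → ∃ b ∈ 𝔹, ¬ ρ a bᶜ ∧ ¬ ρ b cᶜ)
    (hBC2 : ∀ a b : B, ρ a b → ∃ c ∈ 𝔹, ρ a (c ⊓ b))
    (hBC3 : ∀ a : B, a ≠ ⊥ → ∃ b ∈ 𝔹, b ≠ ⊥ ∧ ¬ ρ b aᶜ)
    (htop : (⊤ : B) ∉ 𝔹) :
    -- σ_∞ = {b | b ∉ 𝔹} is a cluster in (B, C_ρ), where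
    -- C_ρ a b := ρ a b ∨ (a ∉ 𝔹 ∧ b ∉ 𝔹)
    ({b : B | b ∉ 𝔹}.Nonempty) ∧
    (∀ a ∈ {b : B | b ∉ 𝔹}, ∀ b ∈ {b : B | b ∉ 𝔹}, ρ a b ∨ (a ∉ 𝔹 ∧ b ∉ 𝔹)) ∧
    (∀ a b : B, a ⊔ b ∈ {b : B | b ∉ 𝔹} → a ∈ {b : B | b ∉ 𝔹} ∨ b ∈ {b : B | b ∉ 𝔹}) ∧
    (∀ a : B, (∀ b ∈ {b : B | b ∉ 𝔹}, ρ a b ∨ (a ∉ 𝔹 ∧ b ∉ 𝔹)) → a ∈ {b : B | b ∉ 𝔹}) :=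
  stmt_7_general ρ 𝔹 hC2 hsup hBC1 htop
end

section
/- If X is a locally compact Hausdorff space, then (RC(X), ρ_X, CR(X)) is a local contact algebra, where CR(X) is the set of compact regular closed subsets of X. -/
/-!
Everything rests on one separation property of a locally compact R₁ space: a compact set `K`
inside an open set `U` fits as `K ⊆ int G ⊆ G ⊆ U` for a compact regular closed `G`, namely the
closure of the interior of a compact neighbourhood of `K` inside `U`. Each of (BC1)–(BC3) is an
instance of it (with `K` compact, resp. a point); the remaining axioms are set algebra.
-/

open Set

theorem inter_closure_compl_eq_empty_iff {X : Type*} [TopologicalSpace X] {s t : Set X} :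
    s ∩ closure tᶜ = ∅ ↔ s ⊆ interior t := by
  rw [closure_compl, ← disjoint_iff_inter_eq_empty, disjoint_compl_right_iff_subset]

theorem closure_interior_union_eq {X : Type*} [TopologicalSpace X] {F G : Set X}
    (hF : closure (interior F) = F) (hG : closure (interior G) = G) :
    closure (interior (F ∪ G)) = F ∪ G := by
  refine subset_antisymm ?_ ?_
  · exact closure_minimal interior_subset ((hF ▸ isClosed_closure).union (hG ▸ isClosed_closure))
  · calc F ∪ G = closure (interior F ∪ interior G) := by rw [closure_union, hF, hG]
      _ ⊆ closure (interior (F ∪ G)) :=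
        closure_mono (union_subset (interior_mono subset_union_left)
          (interior_mono subset_union_right))

section LocallyCompactR1

variable {X : Type*} [TopologicalSpace X] [LocallyCompactSpace X] [R1Space X]

theorem exists_compact_regularClosed_between {K U : Set X} (hK : IsCompact K) (hU : IsOpen U)
    (hKU : K ⊆ U) :
    ∃ G, closure (interior G) = G ∧ IsCompact G ∧ K ⊆ interior G ∧ G ⊆ U := by
  obtain ⟨L, hL, hKL, hLU⟩ := exists_compact_between hK hU hKU
  refine ⟨closure (interior L), closure_interior_idem, hL.closure_of_subset interior_subset,
    hKL.trans isOpen_interior.subset_interior_closure, ?_⟩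
  exact (closure_mono interior_subset).trans (hL.closure_subset_of_isOpen hU hLU)

theorem exists_compact_regularClosed_mem_closure_interior_inter {G : Set X} {x : X}
    (hG : closure (interior G) = G) (hx : x ∈ G) :
    ∃ H, closure (interior H) = H ∧ IsCompact H ∧ x ∈ closure (interior (H ∩ G)) := by
  obtain ⟨H, hH, hHc, hxH, -⟩ :=
    exists_compact_regularClosed_between isCompact_singleton isOpen_univ (subset_univ {x})
  refine ⟨H, hH, hHc, ?_⟩
  rw [interior_inter]
  exact isOpen_interior.inter_closure ⟨hxH rfl, by rwa [hG]⟩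

theorem exists_nonempty_compact_regularClosed_subset_interior {F : Set X}
    (hF : closure (interior F) = F) (hne : F.Nonempty) :
    ∃ G, closure (interior G) = G ∧ IsCompact G ∧ G.Nonempty ∧ G ⊆ interior F := by
  rw [← hF, closure_nonempty_iff] at hne
  obtain ⟨x, hx⟩ := hne
  obtain ⟨G, hG, hGc, hxG, hGF⟩ :=
    exists_compact_regularClosed_between isCompact_singleton isOpen_interior
      (singleton_subset_iff.2 hx)
  exact ⟨G, hG, hGc, ⟨x, interior_subset (hxG rfl)⟩, hGF⟩

end LocallyCompactR1

/-- For a locally compact Hausdorff space X, (RC(X), ρ_X, CR(X)) is a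
local contact algebra. Here F ≪ G means F ∩ cl(Gᶜ) = ∅ (i.e. F (-ρ) G*). -/
theorem stmt_8 (X : Type*) [TopologicalSpace X] [LocallyCompactSpace X] [T2Space X] :
    -- (RC(X), ρ_X) is a contact algebra
    (∀ F : Set X, closure (interior F) = F → F ≠ ∅ → F ∩ F ≠ ∅) ∧
    (∀ F G : Set X, F ∩ G ≠ ∅ → F ≠ ∅ ∧ G ≠ ∅) ∧
    (∀ F G : Set X, F ∩ G ≠ ∅ → G ∩ F ≠ ∅) ∧
    (∀ F G H : Set X, F ∩ (G ∪ H) ≠ ∅ ↔ F ∩ G ≠ ∅ ∨ F ∩ H ≠ ∅) ∧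
    -- CR(X) is an ideal of RC(X)
    ((∅ : Set X) ∈ {F : Set X | closure (interior F) = F ∧ IsCompact F}) ∧
    (∀ F G : Set X, closure (interior F) = F → F ⊆ G →
      closure (interior G) = G ∧ IsCompact G → IsCompact F) ∧
    (∀ F G : Set X, (closure (interior F) = F ∧ IsCompact F) →
      (closure (interior G) = G ∧ IsCompact G) →
      closure (interior (F ∪ G)) = F ∪ G ∧ IsCompact (F ∪ G)) ∧
    -- (BC1)
    (∀ F H : Set X, closure (interior F) = F → IsCompact F →
      closure (interior H) = H → F ∩ closure Hᶜ = ∅ →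
      ∃ G : Set X, closure (interior G) = G ∧ IsCompact G ∧
        F ∩ closure Gᶜ = ∅ ∧ G ∩ closure Hᶜ = ∅) ∧
    -- (BC2)
    (∀ F G : Set X, closure (interior F) = F → closure (interior G) = G →
      F ∩ G ≠ ∅ → ∃ H : Set X, closure (interior H) = H ∧ IsCompact H ∧
        F ∩ closure (interior (H ∩ G)) ≠ ∅) ∧
    -- (BC3)
    (∀ F : Set X, closure (interior F) = F → F ≠ ∅ →
      ∃ G : Set X, closure (interior G) = G ∧ IsCompact G ∧ G ≠ ∅ ∧
        G ∩ closure Fᶜ = ∅) := by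
  simp only [← nonempty_iff_ne_empty, inter_closure_compl_eq_empty_iff]
  refine ⟨fun _ _ hF ↦ by rwa [inter_self], fun _ _ h ↦ ⟨h.left, h.right⟩,
    fun _ _ h ↦ by rwa [inter_comm], fun F G H ↦ by rw [inter_union_distrib_left, union_nonempty],
    ⟨by simp, isCompact_empty⟩,
    fun _ _ hF hFG hG ↦ hG.2.of_isClosed_subset (hF ▸ isClosed_closure) hFG,
    fun _ _ hF hG ↦ ⟨closure_interior_union_eq hF.1 hG.1, hF.2.union hG.2⟩,
    fun _ _ _ hFc _ hFH ↦ exists_compact_regularClosed_between hFc isOpen_interior hFH, ?_,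
    fun _ ↦ exists_nonempty_compact_regularClosed_subset_interior⟩
  rintro F G - hG ⟨x, hxF, hxG⟩
  obtain ⟨H, hH, hHc, hx⟩ := exists_compact_regularClosed_mem_closure_interior_inter hG hxG
  exact ⟨H, hH, hHc, x, hxF, hx⟩
end

section
/- Let (A, ρ, 𝔹) be a local contact algebra. The poset of δ-ideals of (A, ρ, 𝔹), ordered by inclusion, is a frame (complete lattice satisfying the infinite distributive law), in which finite meets and arbitrary joins coincide with those in the frame Idl(A) of all ideals of A. -/
/-- `I` is a δ-ideal of the local contact algebra `(A, ρ, 𝔹)`. -/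
def IsDeltaIdeal {A : Type*} [BooleanAlgebra A] (ρ : A → A → Prop) (𝔹 : Set A)
    (I : Set A) : Prop :=
  (⊥ ∈ I) ∧ (∀ a b : A, a ≤ b → b ∈ I → a ∈ I) ∧
  (∀ a b : A, a ∈ I → b ∈ I → a ⊔ b ∈ I) ∧ I ⊆ 𝔹 ∧
  (∀ a ∈ I, ∃ b ∈ I, ¬ ρ a bᶜ)

/-- The join of a family of ideals in Idl(A): all finite joins of elements
of the members of the family. -/
def idealJoin {A : Type*} [BooleanAlgebra A] (S : Set (Set A)) : Set A :=
  {x : A | ∃ s : Finset A, (↑s : Set A) ⊆ ⋃₀ S ∧ x = s.sup id}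

/-!
Intersections and `idealJoin`s of δ-ideals are again δ-ideals, hence they are the meets and joins
of the poset of δ-ideals. For joins the point is that `≪` is preserved by binary joins,
`a ⊔ a' ≪ b ⊔ b'` whenever `a ≪ b` and `a' ≪ b'`, because the contact relation is additive in
each argument (on the left by symmetry). Distributivity is inherited from `A`: an element `x ≤ ⋁ t`
of an ideal `I` equals `⋁_{y ∈ t} (x ⊓ y)`, a join of elements of the ideals `I ∩ J`.
-/

section LocalContactAlgebra

variable {A : Type*} [BooleanAlgebra A] {ρ : A → A → Prop} {𝔹 : Set A}

theorem contact_mono_right (hadd : ∀ a b c : A, ρ a (b ⊔ c) ↔ ρ a b ∨ ρ a c)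
    {a b c : A} (h : ρ a b) (hbc : b ≤ c) : ρ a c := by
  simpa [sup_eq_right.mpr hbc] using (hadd a b c).mpr (Or.inl h)

theorem not_contact_sup_compl_sup (hsymm : ∀ a b : A, ρ a b → ρ b a)
    (hadd : ∀ a b c : A, ρ a (b ⊔ c) ↔ ρ a b ∨ ρ a c) {a b a' b' : A}
    (h : ¬ ρ a bᶜ) (h' : ¬ ρ a' b'ᶜ) : ¬ ρ (a ⊔ a') (b ⊔ b')ᶜ := by
  intro hρ
  rcases (hadd _ a a').mp (hsymm _ _ hρ) with hρ | hρ
  · exact h (contact_mono_right hadd (hsymm _ _ hρ) (compl_le_compl le_sup_left))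
  · exact h' (contact_mono_right hadd (hsymm _ _ hρ) (compl_le_compl le_sup_right))

namespace IsDeltaIdeal

variable {I J : Set A}

theorem bot_mem (hI : IsDeltaIdeal ρ 𝔹 I) : ⊥ ∈ I := hI.1

theorem isLowerSet (hI : IsDeltaIdeal ρ 𝔹 I) : IsLowerSet I :=
  fun _ _ hab hb => hI.2.1 _ _ hab hb

theorem sup_mem (hI : IsDeltaIdeal ρ 𝔹 I) {a b : A} (ha : a ∈ I) (hb : b ∈ I) : a ⊔ b ∈ I :=
  hI.2.2.1 a b ha hb

theorem subset (hI : IsDeltaIdeal ρ 𝔹 I) : I ⊆ 𝔹 := hI.2.2.2.1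

theorem exists_not_contact_compl (hI : IsDeltaIdeal ρ 𝔹 I) {a : A} (ha : a ∈ I) :
    ∃ b ∈ I, ¬ ρ a bᶜ :=
  hI.2.2.2.2 a ha

theorem inter (hadd : ∀ a b c : A, ρ a (b ⊔ c) ↔ ρ a b ∨ ρ a c)
    (hI : IsDeltaIdeal ρ 𝔹 I) (hJ : IsDeltaIdeal ρ 𝔹 J) : IsDeltaIdeal ρ 𝔹 (I ∩ J) := by
  refine ⟨⟨hI.bot_mem, hJ.bot_mem⟩, fun a b hab hb => ⟨hI.isLowerSet hab hb.1,
    hJ.isLowerSet hab hb.2⟩, fun a b ha hb => ⟨hI.sup_mem ha.1 hb.1, hJ.sup_mem ha.2 hb.2⟩,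
    fun a ha => hI.subset ha.1, fun a ha => ?_⟩
  obtain ⟨b, hb, hab⟩ := hI.exists_not_contact_compl ha.1
  obtain ⟨b', hb', hab'⟩ := hJ.exists_not_contact_compl ha.2
  refine ⟨b ⊓ b', ⟨hI.isLowerSet inf_le_left hb, hJ.isLowerSet inf_le_right hb'⟩, ?_⟩
  rw [compl_inf, hadd, not_or]
  exact ⟨hab, hab'⟩

end IsDeltaIdeal

section IdealJoin

variable {S : Set (Set A)}

theorem mem_idealJoin_of_mem {I : Set A} (hI : I ∈ S) {x : A} (hx : x ∈ I) :
    x ∈ idealJoin S :=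
  ⟨{x}, by simpa using ⟨I, hI, hx⟩, by simp⟩

theorem bot_mem_idealJoin : (⊥ : A) ∈ idealJoin S := ⟨∅, by simp, by simp⟩

theorem sup_mem_idealJoin {a b : A} (ha : a ∈ idealJoin S) (hb : b ∈ idealJoin S) :
    a ⊔ b ∈ idealJoin S := by
  classical
  obtain ⟨t, ht, rfl⟩ := ha
  obtain ⟨u, hu, rfl⟩ := hb
  exact ⟨t ∪ u, by simpa using Set.union_subset ht hu, Finset.sup_union.symm⟩

theorem idealJoin_subset {K : Set A} (hbot : ⊥ ∈ K) (hsup : ∀ a b : A, a ∈ K → b ∈ K → a ⊔ b ∈ K)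
    (hS : ⋃₀ S ⊆ K) : idealJoin S ⊆ K := by
  rintro _ ⟨t, ht, rfl⟩
  exact Finset.sup_induction hbot (fun a ha b hb => hsup a b ha hb) fun y hy => hS (ht hy)

theorem mem_idealJoin_of_le_sup {x : A} {t : Finset A} (hx : x ≤ t.sup id)
    (h : ∀ y ∈ t, x ⊓ y ∈ ⋃₀ S) : x ∈ idealJoin S := by
  classical
  refine ⟨t.image (x ⊓ ·), by simpa [Set.subset_def] using h, ?_⟩
  rw [Finset.sup_image]
  calc x = x ⊓ t.sup id := (inf_eq_left.mpr hx).symm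
    _ = t.sup (x ⊓ ·) := Finset.sup_inf_distrib_left t id x

theorem isLowerSet_idealJoin (hS : ∀ I ∈ S, IsLowerSet I) : IsLowerSet (idealJoin S) := by
  rintro _ x hx ⟨t, ht, rfl⟩
  refine mem_idealJoin_of_le_sup hx fun y hy => ?_
  obtain ⟨I, hI, hyI⟩ := ht hy
  exact ⟨I, hI, hS I hI inf_le_right hyI⟩

theorem inter_idealJoin_subset {I : Set A} (hI : IsLowerSet I) (hS : ∀ J ∈ S, IsLowerSet J) :
    I ∩ idealJoin S ⊆ idealJoin ((I ∩ ·) '' S) := by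
  rintro _ ⟨hxI, t, ht, rfl⟩
  refine mem_idealJoin_of_le_sup le_rfl fun y hy => ?_
  obtain ⟨J, hJ, hyJ⟩ := ht hy
  exact ⟨I ∩ J, ⟨J, hJ, rfl⟩, hI inf_le_left hxI, hS J hJ inf_le_right hyJ⟩

theorem exists_not_contact_compl_of_mem_idealJoin (hρbot : ∀ c : A, ¬ ρ ⊥ c)
    (hsymm : ∀ a b : A, ρ a b → ρ b a) (hadd : ∀ a b c : A, ρ a (b ⊔ c) ↔ ρ a b ∨ ρ a c)
    (hS : ∀ I ∈ S, IsDeltaIdeal ρ 𝔹 I) {x : A} (hx : x ∈ idealJoin S) :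
    ∃ b ∈ idealJoin S, ¬ ρ x bᶜ := by
  obtain ⟨t, ht, rfl⟩ := hx
  refine Finset.sup_induction (p := fun x => ∃ b ∈ idealJoin S, ¬ ρ x bᶜ)
    ⟨⊥, bot_mem_idealJoin, hρbot _⟩ ?_ fun y hy => ?_
  · rintro a ⟨b, hb, hab⟩ a' ⟨b', hb', hab'⟩
    exact ⟨b ⊔ b', sup_mem_idealJoin hb hb', not_contact_sup_compl_sup hsymm hadd hab hab'⟩
  · obtain ⟨I, hI, hyI⟩ := ht hy
    obtain ⟨b, hb, hyb⟩ := (hS I hI).exists_not_contact_compl hyI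
    exact ⟨b, mem_idealJoin_of_mem hI hb, hyb⟩

theorem isDeltaIdeal_idealJoin (hρbot : ∀ c : A, ¬ ρ ⊥ c)
    (hsymm : ∀ a b : A, ρ a b → ρ b a) (hadd : ∀ a b c : A, ρ a (b ⊔ c) ↔ ρ a b ∨ ρ a c)
    (h𝔹bot : ⊥ ∈ 𝔹) (h𝔹sup : ∀ a b : A, a ∈ 𝔹 → b ∈ 𝔹 → a ⊔ b ∈ 𝔹)
    (hS : ∀ I ∈ S, IsDeltaIdeal ρ 𝔹 I) : IsDeltaIdeal ρ 𝔹 (idealJoin S) :=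
  ⟨bot_mem_idealJoin,
    fun _ _ hab hb => isLowerSet_idealJoin (fun I hI => (hS I hI).isLowerSet) hab hb,
    fun _ _ => sup_mem_idealJoin,
    idealJoin_subset h𝔹bot h𝔹sup (Set.sUnion_subset fun I hI => (hS I hI).subset),
    fun _ => exists_not_contact_compl_of_mem_idealJoin hρbot hsymm hadd hS⟩

end IdealJoin

abbrev deltaIdealCompleteLattice (hρbot : ∀ c : A, ¬ ρ ⊥ c)
    (hsymm : ∀ a b : A, ρ a b → ρ b a) (hadd : ∀ a b c : A, ρ a (b ⊔ c) ↔ ρ a b ∨ ρ a c)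
    (h𝔹bot : ⊥ ∈ 𝔹) (h𝔹sup : ∀ a b : A, a ∈ 𝔹 → b ∈ 𝔹 → a ⊔ b ∈ 𝔹) :
    CompleteLattice {I : Set A // IsDeltaIdeal ρ 𝔹 I} :=
  letI : SupSet {I : Set A // IsDeltaIdeal ρ 𝔹 I} :=
    ⟨fun S => ⟨idealJoin (Subtype.val '' S), isDeltaIdeal_idealJoin hρbot hsymm hadd h𝔹bot h𝔹sup
      (by rintro _ ⟨J, -, rfl⟩; exact J.2)⟩⟩
  { completeLatticeOfSup _ fun S =>
      ⟨fun J hJ => by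
          exact fun _ hx => mem_idealJoin_of_mem (S := Subtype.val '' S) ⟨J, hJ, rfl⟩ hx,
        fun K hK => idealJoin_subset K.2.bot_mem (fun _ _ => K.2.sup_mem)
          (Set.sUnion_subset (by rintro _ ⟨J, hJ, rfl⟩; exact hK hJ))⟩ with
    inf := fun I J => ⟨I.1 ∩ J.1, I.2.inter hadd J.2⟩
    inf_le_left := fun _ _ => Set.inter_subset_left
    inf_le_right := fun _ _ => Set.inter_subset_right
    le_inf := fun _ _ _ => Set.subset_inter }

abbrev deltaIdealFrame (hρbot : ∀ c : A, ¬ ρ ⊥ c)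
    (hsymm : ∀ a b : A, ρ a b → ρ b a) (hadd : ∀ a b c : A, ρ a (b ⊔ c) ↔ ρ a b ∨ ρ a c)
    (h𝔹bot : ⊥ ∈ 𝔹) (h𝔹sup : ∀ a b : A, a ∈ 𝔹 → b ∈ 𝔹 → a ⊔ b ∈ 𝔹) :
    Order.Frame {I : Set A // IsDeltaIdeal ρ 𝔹 I} :=
  letI := deltaIdealCompleteLattice hρbot hsymm hadd h𝔹bot h𝔹sup
  Order.Frame.ofMinimalAxioms ⟨fun I S =>
    (inter_idealJoin_subset I.2.isLowerSet (by rintro _ ⟨J, -, rfl⟩; exact J.2.isLowerSet)).trans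
      (idealJoin_subset (⨆ J ∈ S, I ⊓ J).2.bot_mem (fun _ _ => (⨆ J ∈ S, I ⊓ J).2.sup_mem)
        (Set.sUnion_subset (by
          rintro _ ⟨_, ⟨J, hJ, rfl⟩, rfl⟩
          exact le_iSup₂ (f := fun J (_ : J ∈ S) => I ⊓ J) J hJ)))⟩

end LocalContactAlgebra

theorem stmt_10_general {A : Type*} [BooleanAlgebra A] (ρ : A → A → Prop) (𝔹 : Set A)
    (hC2 : ∀ a b : A, ρ a b → a ≠ ⊥ ∧ b ≠ ⊥)
    (hC3 : ∀ a b : A, ρ a b → ρ b a)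
    (hC4 : ∀ a b c : A, ρ a (b ⊔ c) ↔ ρ a b ∨ ρ a c)
    (hbot : ⊥ ∈ 𝔹)
    (hsup : ∀ a b : A, a ∈ 𝔹 → b ∈ 𝔹 → a ⊔ b ∈ 𝔹) :
    ∃ inst : Order.Frame {I : Set A // IsDeltaIdeal ρ 𝔹 I},
      letI := inst
      (∀ I J : {I : Set A // IsDeltaIdeal ρ 𝔹 I}, I ≤ J ↔ I.1 ⊆ J.1) ∧
      (∀ I J : {I : Set A // IsDeltaIdeal ρ 𝔹 I}, (I ⊓ J).1 = I.1 ∩ J.1) ∧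
      (∀ S : Set {I : Set A // IsDeltaIdeal ρ 𝔹 I},
        (sSup S).1 = idealJoin (Subtype.val '' S)) :=
  ⟨deltaIdealFrame (fun _ h => (hC2 _ _ h).1 rfl) hC3 hC4 hbot hsup,
    fun _ _ => Iff.rfl, fun _ _ => rfl, fun _ => rfl⟩

/-- The poset of δ-ideals of a local contact algebra (A, ρ, 𝔹), ordered by
inclusion, is a frame in which finite meets and arbitrary joins coincide
with those in the frame Idl(A) of all ideals of A. -/
theorem stmt_10 {A : Type*} [BooleanAlgebra A] (ρ : A → A → Prop) (𝔹 : Set A)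
    (hC1 : ∀ a : A, a ≠ ⊥ → ρ a a)
    (hC2 : ∀ a b : A, ρ a b → a ≠ ⊥ ∧ b ≠ ⊥)
    (hC3 : ∀ a b : A, ρ a b → ρ b a)
    (hC4 : ∀ a b c : A, ρ a (b ⊔ c) ↔ ρ a b ∨ ρ a c)
    (hbot : ⊥ ∈ 𝔹)
    (hdown : ∀ a b : A, a ≤ b → b ∈ 𝔹 → a ∈ 𝔹)
    (hsup : ∀ a b : A, a ∈ 𝔹 → b ∈ 𝔹 → a ⊔ b ∈ 𝔹)
    (hBC1 : ∀ a c : A, a ∈ 𝔹 → ¬ ρ a cᶜ → ∃ b ∈ 𝔹, ¬ ρ a bᶜ ∧ ¬ ρ b cᶜ)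
    (hBC2 : ∀ a b : A, ρ a b → ∃ c ∈ 𝔹, ρ a (c ⊓ b))
    (hBC3 : ∀ a : A, a ≠ ⊥ → ∃ b ∈ 𝔹, b ≠ ⊥ ∧ ¬ ρ b aᶜ) :
    ∃ inst : Order.Frame {I : Set A // IsDeltaIdeal ρ 𝔹 I},
      letI := inst
      (∀ I J : {I : Set A // IsDeltaIdeal ρ 𝔹 I}, I ≤ J ↔ I.1 ⊆ J.1) ∧
      (∀ I J : {I : Set A // IsDeltaIdeal ρ 𝔹 I}, (I ⊓ J).1 = I.1 ∩ J.1) ∧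
      (∀ S : Set {I : Set A // IsDeltaIdeal ρ 𝔹 I},
        (sSup S).1 = idealJoin (Subtype.val '' S)) :=
  stmt_10_general ρ 𝔹 hC2 hC3 hC4 hbot hsup
end

section
/- Let (A, ρ, 𝔹) be a complete local contact algebra and let σ₁, σ₂ be bounded clusters in (A, ρ, 𝔹) (i.e., clusters of (A, C_ρ) meeting 𝔹). If σ₁ ∩ 𝔹 = σ₂ ∩ 𝔹 then σ₁ = σ₂. -/
/-- An element `a ∈ τ₁ \ 𝔹` is in Alexandroff contact with every `b ∈ τ₂`: either `b ∉ 𝔹`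
too, or `b ∈ τ₁ ∩ 𝔹` and (K1) for `τ₁` applies; so (K3) for `τ₂` puts `a` in `τ₂`. -/
theorem subset_of_inter_eq_of_cluster {A : Type*} (ρ : A → A → Prop) (𝔹 : Set A)
    {τ₁ τ₂ : Set A}
    (hK1 : ∀ a ∈ τ₁, ∀ b ∈ τ₁, ρ a b ∨ (a ∉ 𝔹 ∧ b ∉ 𝔹))
    (hK3 : ∀ a : A, (∀ b ∈ τ₂, ρ a b ∨ (a ∉ 𝔹 ∧ b ∉ 𝔹)) → a ∈ τ₂)
    (heq : τ₁ ∩ 𝔹 = τ₂ ∩ 𝔹) :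
    τ₁ ⊆ τ₂ := by
  intro a ha
  by_cases haB : a ∈ 𝔹
  · exact (heq ▸ ⟨ha, haB⟩ : a ∈ τ₂ ∩ 𝔹).1
  refine hK3 a fun b hb => ?_
  by_cases hbB : b ∈ 𝔹
  · have hb₁ : b ∈ τ₁ := (heq ▸ ⟨hb, hbB⟩ : b ∈ τ₁ ∩ 𝔹).1
    exact (hK1 a ha b hb₁).imp_right fun h => absurd hbB h.2
  · exact Or.inr ⟨haB, hbB⟩

theorem stmt_11_general {A : Type*} (ρ : A → A → Prop) (𝔹 : Set A)
    (σ₁ σ₂ : Set A)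
    -- σ₁, σ₂ are clusters in (A, C_ρ)
    (h₁K1 : ∀ a ∈ σ₁, ∀ b ∈ σ₁, ρ a b ∨ (a ∉ 𝔹 ∧ b ∉ 𝔹))
    (h₁K3 : ∀ a : A, (∀ b ∈ σ₁, ρ a b ∨ (a ∉ 𝔹 ∧ b ∉ 𝔹)) → a ∈ σ₁)
    (h₂K1 : ∀ a ∈ σ₂, ∀ b ∈ σ₂, ρ a b ∨ (a ∉ 𝔹 ∧ b ∉ 𝔹))
    (h₂K3 : ∀ a : A, (∀ b ∈ σ₂, ρ a b ∨ (a ∉ 𝔹 ∧ b ∉ 𝔹)) → a ∈ σ₂)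
    (h : σ₁ ∩ 𝔹 = σ₂ ∩ 𝔹) :
    σ₁ = σ₂ :=
  (subset_of_inter_eq_of_cluster ρ 𝔹 h₁K1 h₂K3 h).antisymm
    (subset_of_inter_eq_of_cluster ρ 𝔹 h₂K1 h₁K3 h.symm)

/-- In a complete local contact algebra, bounded clusters agreeing on 𝔹
are equal. Here C_ρ a b := ρ a b ∨ (a ∉ 𝔹 ∧ b ∉ 𝔹). -/
theorem stmt_11 {A : Type*} [CompleteBooleanAlgebra A] (ρ : A → A → Prop) (𝔹 : Set A)
    (hC1 : ∀ a : A, a ≠ ⊥ → ρ a a)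
    (hC2 : ∀ a b : A, ρ a b → a ≠ ⊥ ∧ b ≠ ⊥)
    (hC3 : ∀ a b : A, ρ a b → ρ b a)
    (hC4 : ∀ a b c : A, ρ a (b ⊔ c) ↔ ρ a b ∨ ρ a c)
    (hbot : ⊥ ∈ 𝔹)
    (hdown : ∀ a b : A, a ≤ b → b ∈ 𝔹 → a ∈ 𝔹)
    (hsup : ∀ a b : A, a ∈ 𝔹 → b ∈ 𝔹 → a ⊔ b ∈ 𝔹)
    (hBC1 : ∀ a c : A, a ∈ 𝔹 → ¬ ρ a cᶜ → ∃ b ∈ 𝔹, ¬ ρ a bᶜ ∧ ¬ ρ b cᶜ)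
    (hBC2 : ∀ a b : A, ρ a b → ∃ c ∈ 𝔹, ρ a (c ⊓ b))
    (hBC3 : ∀ a : A, a ≠ ⊥ → ∃ b ∈ 𝔹, b ≠ ⊥ ∧ ¬ ρ b aᶜ)
    (σ₁ σ₂ : Set A)
    -- σ₁, σ₂ are clusters in (A, C_ρ)
    (h₁ne : σ₁.Nonempty)
    (h₁K1 : ∀ a ∈ σ₁, ∀ b ∈ σ₁, ρ a b ∨ (a ∉ 𝔹 ∧ b ∉ 𝔹))
    (h₁K2 : ∀ a b : A, a ⊔ b ∈ σ₁ → a ∈ σ₁ ∨ b ∈ σ₁)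
    (h₁K3 : ∀ a : A, (∀ b ∈ σ₁, ρ a b ∨ (a ∉ 𝔹 ∧ b ∉ 𝔹)) → a ∈ σ₁)
    (h₂ne : σ₂.Nonempty)
    (h₂K1 : ∀ a ∈ σ₂, ∀ b ∈ σ₂, ρ a b ∨ (a ∉ 𝔹 ∧ b ∉ 𝔹))
    (h₂K2 : ∀ a b : A, a ⊔ b ∈ σ₂ → a ∈ σ₂ ∨ b ∈ σ₂)
    (h₂K3 : ∀ a : A, (∀ b ∈ σ₂, ρ a b ∨ (a ∉ 𝔹 ∧ b ∉ 𝔹)) → a ∈ σ₂)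
    -- bounded
    (h₁b : (σ₁ ∩ 𝔹).Nonempty) (h₂b : (σ₂ ∩ 𝔹).Nonempty)
    (h : σ₁ ∩ 𝔹 = σ₂ ∩ 𝔹) :
    σ₁ = σ₂ :=
  stmt_11_general ρ 𝔹 σ₁ σ₂ h₁K1 h₁K3 h₂K1 h₂K3 h
end

section
/- Let f : X → Y be a continuous map between locally compact Hausdorff spaces and φ_f(G) = {F ∈ CR(X) : F ⊆ f⁻¹(int G)}. Then for every G ∈ RC(Y) and every F ∈ φ_f(G), there exists H ∈ CR(Y) with H ⊆ int(G) and F ∈ φ_f(H). -/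
open Set

theorem exists_isCompact_regularClosed_between {Y : Type*} [TopologicalSpace Y]
    [LocallyCompactSpace Y] [RegularSpace Y] {K U : Set Y} (hK : IsCompact K) (hU : IsOpen U)
    (hKU : K ⊆ U) :
    ∃ H : Set Y, closure (interior H) = H ∧ IsCompact H ∧ H ⊆ U ∧ K ⊆ interior H := by
  obtain ⟨L, hLc, hLcl, hKL, hLU⟩ := exists_compact_closed_between hK hU hKU
  have hHL : closure (interior L) ⊆ L := hLcl.closure_interior_subset
  refine ⟨closure (interior L), closure_interior_idem, ?_, hHL.trans hLU, ?_⟩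
  · exact hLc.of_isClosed_subset isClosed_closure hHL
  · exact hKL.trans isOpen_interior.subset_interior_closure

theorem stmt_15_general {X Y : Type*} [TopologicalSpace X]
    [TopologicalSpace Y] [LocallyCompactSpace Y] [T2Space Y]
    (f : X → Y) (hf : Continuous f)
    (G : Set Y)
    (F : Set X) (hFc : IsCompact F)
    (hFG : F ⊆ f ⁻¹' (interior G)) :
    ∃ H : Set Y, closure (interior H) = H ∧ IsCompact H ∧ H ⊆ interior G ∧
      F ⊆ f ⁻¹' (interior H) := by
  obtain ⟨H, hH, hHc, hHG, hFH⟩ := exists_isCompact_regularClosed_between (hFc.image hf)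
    isOpen_interior (image_subset_iff.mpr hFG)
  exact ⟨H, hH, hHc, hHG, image_subset_iff.mp hFH⟩

/-- For every G ∈ RC(Y) and every F ∈ φ_f(G), there is H ∈ CR(Y) with
H ⊆ int(G) and F ∈ φ_f(H). -/
theorem stmt_15 {X Y : Type*} [TopologicalSpace X] [LocallyCompactSpace X] [T2Space X]
    [TopologicalSpace Y] [LocallyCompactSpace Y] [T2Space Y]
    (f : X → Y) (hf : Continuous f)
    (G : Set Y) (hG : closure (interior G) = G)
    (F : Set X) (hF : closure (interior F) = F) (hFc : IsCompact F)
    (hFG : F ⊆ f ⁻¹' (interior G)) :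
    ∃ H : Set Y, closure (interior H) = H ∧ IsCompact H ∧ H ⊆ interior G ∧
      F ⊆ f ⁻¹' (interior H) :=
  stmt_15_general f hf G F hFc hFG
end

section
/- For a locally compact Hausdorff space X, the map t_X : X → Clust(RC(X), C), sending x to σ_x = {F ∈ RC(X) : x ∈ F}, is well-defined: for each x ∈ X, σ_x is a bounded cluster of the local contact algebra (RC(X), ρ_X, CR(X)). -/
/-! (K1) and (K2) hold because every member of σ_x contains x. For (K3) and boundedness,
local compactness and regularity give, inside any open neighbourhood of x, a compact
regular closed set containing x: if x ∉ F, such a set inside Fᶜ is compact and misses F,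
so F is not in contact with it. -/

open Set

section RegularClosed

variable {X : Type*} [TopologicalSpace X] [LocallyCompactSpace X] [RegularSpace X]

theorem exists_isCompact_regularClosed_subset {x : X} {U : Set X} (hU : IsOpen U)
    (hx : x ∈ U) : ∃ F, (closure (interior F) = F ∧ x ∈ F) ∧ IsCompact F ∧ F ⊆ U := by
  obtain ⟨L, hL, hLcl, hxL, hLU⟩ :=
    exists_compact_closed_between isCompact_singleton hU (singleton_subset_iff.2 hx)
  have hsub : closure (interior L) ⊆ L := hLcl.closure_interior_subset
  exact ⟨closure (interior L), ⟨closure_interior_idem, subset_closure (hxL rfl)⟩,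
    hL.of_isClosed_subset isClosed_closure hsub, hsub.trans hLU⟩

theorem exists_isCompact_regularClosed_disjoint {x : X} {F : Set X} (hF : IsClosed F)
    (hx : x ∉ F) :
    ∃ G, (closure (interior G) = G ∧ x ∈ G) ∧ IsCompact G ∧ F ∩ G = ∅ := by
  obtain ⟨G, hG, hGc, hGF⟩ := exists_isCompact_regularClosed_subset hF.isOpen_compl hx
  exact ⟨G, hG, hGc, disjoint_iff_inter_eq_empty.1 (subset_compl_iff_disjoint_left.1 hGF)⟩

end RegularClosed

/-- For a locally compact Hausdorff space X and x ∈ X, the set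
σ_x = {F ∈ RC(X) : x ∈ F} is a bounded cluster of (RC(X), ρ_X, CR(X)),
i.e. a cluster of (RC(X), C) meeting CR(X), where
F C G iff (F ∩ G ≠ ∅ or both F and G are non-compact). -/
theorem stmt_18 {X : Type*} [TopologicalSpace X] [LocallyCompactSpace X] [T2Space X]
    (x : X) :
    -- σ_x is nonempty
    ({F : Set X | closure (interior F) = F ∧ x ∈ F}.Nonempty) ∧
    -- (K1)
    (∀ F ∈ {F : Set X | closure (interior F) = F ∧ x ∈ F},
     ∀ G ∈ {F : Set X | closure (interior F) = F ∧ x ∈ F},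
      F ∩ G ≠ ∅ ∨ (¬ IsCompact F ∧ ¬ IsCompact G)) ∧
    -- (K2): the join in RC(X) is the union
    (∀ F G : Set X, closure (interior F) = F → closure (interior G) = G →
      F ∪ G ∈ {F : Set X | closure (interior F) = F ∧ x ∈ F} →
      F ∈ {F : Set X | closure (interior F) = F ∧ x ∈ F} ∨
      G ∈ {F : Set X | closure (interior F) = F ∧ x ∈ F}) ∧
    -- (K3)
    (∀ F : Set X, closure (interior F) = F →
      (∀ G ∈ {F : Set X | closure (interior F) = F ∧ x ∈ F},
        F ∩ G ≠ ∅ ∨ (¬ IsCompact F ∧ ¬ IsCompact G)) →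
      F ∈ {F : Set X | closure (interior F) = F ∧ x ∈ F}) ∧
    -- σ_x is bounded
    (∃ F : Set X, (closure (interior F) = F ∧ x ∈ F) ∧ IsCompact F) := by
  refine ⟨⟨univ, by simp⟩, ?contact, ?prime, ?maximal, ?bounded⟩
  case contact =>
    rintro F ⟨-, hxF⟩ G ⟨-, hxG⟩
    exact Or.inl (nonempty_iff_ne_empty.1 ⟨x, hxF, hxG⟩)
  case prime =>
    rintro F G hF hG ⟨-, hxF | hxG⟩
    exacts [Or.inl ⟨hF, hxF⟩, Or.inr ⟨hG, hxG⟩]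
  case maximal =>
    intro F hF hcontact
    refine ⟨hF, by_contra fun hxF ↦ ?_⟩
    obtain ⟨G, hG, hGc, hFG⟩ :=
      exists_isCompact_regularClosed_disjoint (hF ▸ isClosed_closure) hxF
    rcases hcontact G hG with hne | ⟨-, hGnc⟩
    exacts [hne hFG, hGnc hGc]
  case bounded =>
    obtain ⟨F, hF, hFc, -⟩ := exists_isCompact_regularClosed_subset isOpen_univ (mem_univ x)
    exact ⟨F, hF, hFc⟩
end
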